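/- arXiv:2311.14916 — 2 statements merged into one kernel-verified Lean document; each statement's English description precedes it below -/
import Mathlib

section
/- Let M ≥ 1 and consider a two-player matrix game in which player SV chooses a row i ∈ {1,2} (row 1 = Assert, row 2 = Yield) and player EV chooses a column m ∈ {1,…,M}, with cost functions J_SV(i,m) ∈ ℝ and J_EV(i,m) ∈ ℝ. Let b ∈ [0,1] be the belief placed on row 1 (so the belief on row 2 is 1−b), and define the modified SV cost by J̄_SV(1,m) = (1−b)·J_SV(1,m) and J̄_SV(2,m) = b·J_SV(2,m). Assume that for every column m one has 0 ≤ J_SV(1,m) ≤ J_SV(2,m) and J_EV(1,m) ≥ J_EV(2,m) ≥ 0. If b ≥ 1/2, then there exists a column p ∈ {1,…,M} such that the action pair (row 1, column p) is a pure-strategy Nash equilibrium of the game with costs (J̄_SV, J_EV); that is, J̄_SV(1,p) ≤ J̄_SV(2,p) and J_EV(1,p) ≤ J_EV(1,m) for all m ∈ {1,…,M}. -/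
/-- The belief-modified SV cost: row 0 (Assert) is weighted by `1 - b`,
row 1 (Yield) is weighted by `b`. -/
def modSV {M : ℕ} (b : ℝ) (JSV : Fin 2 → Fin M → ℝ) : Fin 2 → Fin M → ℝ :=
  fun i m => if i = 0 then (1 - b) * JSV 0 m else b * JSV 1 m

/-- Proposition 1: if SV's raw costs satisfy `0 ≤ J_SV(1,m) ≤ J_SV(2,m)` and EV's costs
satisfy `J_EV(1,m) ≥ J_EV(2,m) ≥ 0` for all columns, and the belief on Assert satisfies
`b ≥ 1/2`, then there is a column `p` such that (Assert, p) is a pure-strategy Nash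
equilibrium of the game with costs `(J̄_SV, J_EV)`. -/
theorem exists_assert_nash
    (M : ℕ) (hM : 1 ≤ M)
    (JSV JEV : Fin 2 → Fin M → ℝ)
    (b : ℝ) (hb0 : 0 ≤ b) (hb1 : b ≤ 1)
    (hSV : ∀ m : Fin M, 0 ≤ JSV 0 m ∧ JSV 0 m ≤ JSV 1 m)
    (hEV : ∀ m : Fin M, JEV 1 m ≤ JEV 0 m ∧ 0 ≤ JEV 1 m)
    (hb : (1 : ℝ) / 2 ≤ b) :
    ∃ p : Fin M,
      modSV b JSV 0 p ≤ modSV b JSV 1 p ∧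
      ∀ m : Fin M, JEV 0 p ≤ JEV 0 m := by
  haveI : NeZero M := ⟨by omega⟩
  obtain ⟨p, _, hp⟩ := Finset.exists_min_image Finset.univ (fun m => JEV 0 m)
    ⟨0, Finset.mem_univ _⟩
  refine ⟨p, ?_, fun m => hp m (Finset.mem_univ m)⟩
  simp only [modSV, if_pos rfl, if_neg (by decide : (1 : Fin 2) ≠ 0)]
  have h := hSV p
  have h1b : 1 - b ≤ b := by linarith
  calc (1 - b) * JSV 0 p ≤ b * JSV 0 p := by nlinarith [h.1]
    _ ≤ b * JSV 1 p := by nlinarith [h.2]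
end

section
/- Let M ≥ 1 and consider a two-player matrix game in which player SV chooses a row i ∈ {1,2} (row 1 = Assert, row 2 = Yield) and player EV chooses a column m ∈ {1,…,M}, with cost functions J_SV(i,m) ∈ ℝ and J_EV(i,m) ∈ ℝ. Let b ∈ [0,1] be the belief placed on row 1, and define the modified SV cost by J̄_SV(1,m) = (1−b)·J_SV(1,m) and J̄_SV(2,m) = b·J_SV(2,m). Assume that J_EV(1,m) ≥ J_EV(2,m) ≥ 0 for every column m. If the action pair (row 2, column p) is a pure-strategy Nash equilibrium of the game with costs (J̄_SV, J_EV) (i.e., J̄_SV(2,p) ≤ J̄_SV(1,p) and J_EV(2,p) ≤ J_EV(2,m) for all m), then it is also a Stackelberg equilibrium with EV as the leader and SV as the follower: row 2 minimizes SV's modified cost in column p, and for every follower best-response selection f : {1,…,M} → {1,2} (meaning J̄_SV(f(m),m) ≤ J̄_SV(i,m) for all i and m), the column p minimizes the leader's resulting cost, i.e., J_EV(2,p) ≤ J_EV(f(m),m) for all m ∈ {1,…,M}. -/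
/-- Proposition 2: assume `J_EV(1,m) ≥ J_EV(2,m) ≥ 0` for all columns. If
(Yield, p) is a pure-strategy Nash equilibrium of the game with costs `(J̄_SV, J_EV)`,
then it is also a Stackelberg equilibrium with EV as leader and SV as follower:
Yield is a best response of SV in column `p`, and for every follower best-response
selection `f`, column `p` minimizes the leader's resulting cost. -/
theorem yield_nash_is_stackelberg
    (M : ℕ) (hM : 1 ≤ M)
    (JSV JEV : Fin 2 → Fin M → ℝ)
    (b : ℝ) (hb0 : 0 ≤ b) (hb1 : b ≤ 1)
    (hEV : ∀ m : Fin M, JEV 1 m ≤ JEV 0 m ∧ 0 ≤ JEV 1 m)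
    (p : Fin M)
    (hNashSV : modSV b JSV 1 p ≤ modSV b JSV 0 p)
    (hNashEV : ∀ m : Fin M, JEV 1 p ≤ JEV 1 m) :
    (∀ i : Fin 2, modSV b JSV 1 p ≤ modSV b JSV i p) ∧
    (∀ f : Fin M → Fin 2,
      (∀ (i : Fin 2) (m : Fin M), modSV b JSV (f m) m ≤ modSV b JSV i m) →
      ∀ m : Fin M, JEV 1 p ≤ JEV (f m) m) := by
  constructor
  · intro i
    fin_cases i
    · exact hNashSV
    · exact le_refl _
  · intro f _ m
    have h := hEV m
    obtain h2 | h2 : f m = 0 ∨ f m = 1 := by omega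
    all_goals rw [h2]
    · exact le_trans (hNashEV m) h.1
    · exact hNashEV m
end
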